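/- arXiv:2104.03423 — 3 statements merged into one kernel-verified Lean document; each statement's English description precedes it below -/
import Mathlib

section
/- Let V be a finite-dimensional real vector space and f ∈ GL(V) unipotent, and let k(f) denote the largest integer k with (f − Id)^k ≠ 0. Suppose f preserves a closed salient convex cone C ⊂ V with nonempty interior. Then for every linear form φ : V → ℝ with φ(v) > 0 for all v ∈ C ∖ {0}, and every v in the interior of C, there exists a constant C₀ > 0 such that φ(f^n(v)) ∼ C₀ · n^{k(f)} as n → ∞ (i.e., φ(f^n(v))/n^{k(f)} → C₀). -/
/-!
Write `f = 1 + N` with `N ^ (k + 1) = 0`. The binomial theorem gives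
`fⁿ = ∑_{m ≤ k} (n choose m) Nᵐ`, and `(n choose m) / nᵏ` tends to `0` for `m < k` and to
`1 / k!` for `m = k`, so `fⁿ v / nᵏ → Nᵏ v / k!`. As a limit of points of the closed cone `C`,
`Nᵏ v` lies in `C`. It is nonzero: if `Nᵏ v = 0`, then for every `w` and small `t > 0` both
`t • Nᵏ w = Nᵏ (v + t • w)` and `-(t • Nᵏ w) = Nᵏ (v - t • w)` lie in `C`, so salience forces
`Nᵏ w = 0`, contradicting `Nᵏ ≠ 0`. Hence `C₀ = φ (Nᵏ v) / k!` is positive.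
-/

open Filter Finset Asymptotics Topology

theorem add_one_pow_eq_sum_range_of_pow_eq_zero {R : Type*} [Semiring R] {x : R} {k : ℕ}
    (hx : x ^ (k + 1) = 0) (n : ℕ) :
    (x + 1) ^ n = ∑ m ∈ range (k + 1), n.choose m • x ^ m := by
  set g : ℕ → R := fun m => n.choose m • x ^ m
  have hbinom : (x + 1) ^ n = ∑ m ∈ range (n + 1), g m := by
    simp only [(Commute.one_right x).add_pow, one_pow, mul_one, g, nsmul_eq_mul,
      Nat.cast_comm]
  rw [hbinom, ← eventually_constant_sum (N := n + 1) (n := n + 1 + (k + 1)) _ (by omega),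
    eventually_constant_sum (N := k + 1) _ (by omega)]
  · intro m hm
    simp [g, pow_eq_zero_of_le hm hx]
  · intro m hm
    simp [g, Nat.choose_eq_zero_of_lt (show n < m by omega)]

theorem tendsto_choose_div_pow_self (k : ℕ) :
    Tendsto (fun n : ℕ => (n.choose k : ℝ) / n ^ k) atTop (𝓝 (k.factorial : ℝ)⁻¹) := by
  refine ((isEquivalent_choose k).div IsEquivalent.refl).symm.tendsto_nhds ?_
  refine tendsto_const_nhds.congr' ?_
  filter_upwards [eventually_ne_atTop 0] with n hn
  simp only [Pi.div_apply]
  field_simp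

theorem tendsto_choose_div_pow_of_lt {m k : ℕ} (h : m < k) :
    Tendsto (fun n : ℕ => (n.choose m : ℝ) / n ^ k) atTop (𝓝 0) := by
  refine ((isTheta_choose m).isBigO.trans_isLittleO ?_).tendsto_div_nhds_zero
  exact (isLittleO_pow_pow_atTop_of_lt h).comp_tendsto tendsto_natCast_atTop_atTop

section

variable {E : Type*} [AddCommGroup E] [Module ℝ E] [TopologicalSpace E] [ContinuousAdd E]
  [ContinuousSMul ℝ E]

theorem Module.End.tendsto_inv_pow_smul_pow_apply {T : Module.End ℝ E} {k : ℕ}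
    (hT : (T - 1) ^ (k + 1) = 0) (u : E) :
    Tendsto (fun n : ℕ => ((n : ℝ) ^ k)⁻¹ • (T ^ n) u) atTop
      (𝓝 ((k.factorial : ℝ)⁻¹ • ((T - 1) ^ k) u)) := by
  have hexpand : ∀ n : ℕ, ((n : ℝ) ^ k)⁻¹ • (T ^ n) u =
      ∑ m ∈ range k, ((n.choose m : ℝ) / n ^ k) • ((T - 1) ^ m) u
        + ((n.choose k : ℝ) / n ^ k) • ((T - 1) ^ k) u := by
    intro n
    rw [← sub_add_cancel T 1, add_one_pow_eq_sum_range_of_pow_eq_zero hT, add_sub_cancel_right,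
      ← sum_range_succ (fun m => ((n.choose m : ℝ) / n ^ k) • ((T - 1) ^ m) u),
      LinearMap.sum_apply, smul_sum]
    refine sum_congr rfl fun m _ => ?_
    rw [LinearMap.smul_apply, ← Nat.cast_smul_eq_nsmul ℝ, smul_smul, div_eq_inv_mul]
  simp only [hexpand]
  have hlow : Tendsto (fun n : ℕ => ∑ m ∈ range k, ((n.choose m : ℝ) / n ^ k) • ((T - 1) ^ m) u)
      atTop (𝓝 0) := by
    rw [← sum_const_zero (s := range k)]
    refine tendsto_finsetSum _ fun m hm => ?_
    simpa using (tendsto_choose_div_pow_of_lt (mem_range.mp hm)).smul_const (((T - 1) ^ m) u)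
  simpa using hlow.add ((tendsto_choose_div_pow_self k).smul_const (((T - 1) ^ k) u))

theorem Module.End.mapsTo_sub_one_pow {T : Module.End ℝ E} {k : ℕ}
    (hT : (T - 1) ^ (k + 1) = 0) {C : Set E} (hCc : IsClosed C)
    (hCcone : ∀ a : ℝ, 0 ≤ a → ∀ x ∈ C, a • x ∈ C) (hTC : Set.MapsTo T C C) :
    Set.MapsTo ⇑((T - 1) ^ k) C C := by
  intro u hu
  have hlim : (k.factorial : ℝ)⁻¹ • ((T - 1) ^ k : Module.End ℝ E) u ∈ C :=
    hCc.mem_of_tendsto (tendsto_inv_pow_smul_pow_apply hT u) <| .of_forall fun n => by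
      rw [Module.End.coe_pow]
      exact hCcone _ (by positivity) _ (hTC.iterate n hu)
  simpa [smul_smul, mul_inv_cancel₀ (by positivity : (k.factorial : ℝ) ≠ 0)] using
    hCcone k.factorial (by positivity) _ hlim

theorem LinearMap.eq_zero_of_mapsTo_of_mem_interior_of_apply_eq_zero {F : Type*}
    [AddCommGroup F] [Module ℝ F] {C : Set E} {D : Set F}
    (hD : D ∩ -D ⊆ {0}) {L : E →ₗ[ℝ] F} (hL : Set.MapsTo L C D) {v : E} (hv : v ∈ interior C)
    (hLv : L v = 0) : L = 0 := by
  ext w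
  have hnear : ∀ w' : E, ∀ᶠ t : ℝ in 𝓝[>] 0, v + t • w' ∈ C := fun w' =>
    have hcont : Tendsto (fun t : ℝ => v + t • w') (𝓝 0) (𝓝 v) :=
      (continuous_const.add (continuous_id.smul continuous_const)).tendsto' 0 v (by simp)
    (hcont.mono_left nhdsWithin_le_nhds).eventually (mem_interior_iff_mem_nhds.mp hv)
  obtain ⟨t, hplus, hminus, ht⟩ :=
    ((hnear w).and ((hnear (-w)).and self_mem_nhdsWithin)).exists
  have hmem : t • L w ∈ D ∩ -D := by
    refine ⟨?_, ?_⟩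
    · simpa [hLv] using hL hplus
    · simpa [hLv] using hL hminus
  simpa [ht.ne'] using hD hmem

end

theorem stmt1_general {V : Type*} [NormedAddCommGroup V] [NormedSpace ℝ V] [FiniteDimensional ℝ V]
    (f : V ≃ₗ[ℝ] V) (k : ℕ)
    (hk1 : ((f : V →ₗ[ℝ] V) - LinearMap.id) ^ k ≠ 0)
    (hk2 : ((f : V →ₗ[ℝ] V) - LinearMap.id) ^ (k + 1) = 0)
    (C : Set V) (hCc : IsClosed C)
    (hCcone : ∀ a : ℝ, 0 ≤ a → ∀ x ∈ C, a • x ∈ C)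
    (hCsal : C ∩ (-C) ⊆ {0})
    (hfC : ∀ x ∈ C, f x ∈ C)
    (φ : V →ₗ[ℝ] ℝ) (hφ : ∀ x ∈ C, x ≠ 0 → 0 < φ x)
    (v : V) (hv : v ∈ interior C) :
    ∃ C₀ : ℝ, 0 < C₀ ∧
      Tendsto (fun n : ℕ => φ ((f ^ n) v) / (n : ℝ) ^ k) atTop (nhds C₀) := by
  set N : Module.End ℝ V := (f : Module.End ℝ V) - 1
  have hNC : Set.MapsTo ⇑(N ^ k) C C :=
    Module.End.mapsTo_sub_one_pow hk2 hCc hCcone fun x hx => hfC x hx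
  have hNv : (N ^ k) v ≠ 0 := fun h =>
    hk1 (LinearMap.eq_zero_of_mapsTo_of_mem_interior_of_apply_eq_zero hCsal hNC hv h)
  refine ⟨(k.factorial : ℝ)⁻¹ * φ ((N ^ k) v),
    mul_pos (by positivity) (hφ _ (hNC (interior_subset hv)) hNv), ?_⟩
  have hlim := (φ.continuous_of_finiteDimensional.tendsto _).comp
    (Module.End.tendsto_inv_pow_smul_pow_apply hk2 v)
  simpa [Function.comp_def, div_eq_inv_mul, Module.End.coe_pow, LinearEquiv.coe_pow] using hlim

/-- Lemma (Birkhoff-type growth): for a unipotent `f` preserving a closed salient convex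
cone `C` with nonempty interior, a linear form `φ` positive on `C \ {0}`, and `v` in the
interior of `C`, one has `φ(fⁿ v) ∼ C₀ · n^{k(f)}`. -/
theorem stmt1 {V : Type*} [NormedAddCommGroup V] [NormedSpace ℝ V] [FiniteDimensional ℝ V]
    (f : V ≃ₗ[ℝ] V) (k : ℕ)
    (hk1 : ((f : V →ₗ[ℝ] V) - LinearMap.id) ^ k ≠ 0)
    (hk2 : ((f : V →ₗ[ℝ] V) - LinearMap.id) ^ (k + 1) = 0)
    (C : Set V) (hCc : IsClosed C) (hCconv : Convex ℝ C)
    (hCcone : ∀ a : ℝ, 0 ≤ a → ∀ x ∈ C, a • x ∈ C)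
    (hCsal : C ∩ (-C) ⊆ {0})
    (hCint : (interior C).Nonempty)
    (hfC : ∀ x ∈ C, f x ∈ C)
    (φ : V →ₗ[ℝ] ℝ) (hφ : ∀ x ∈ C, x ≠ 0 → 0 < φ x)
    (v : V) (hv : v ∈ interior C) :
    ∃ C₀ : ℝ, 0 < C₀ ∧
      Tendsto (fun n : ℕ => φ ((f ^ n) v) / (n : ℝ) ^ k) atTop (nhds C₀) :=
  stmt1_general f k hk1 hk2 C hCc hCcone hCsal hfC φ hφ v hv
end

section
/- Let f be an automorphism of a compact complex torus X = V/Λ of dimension d induced by a unipotent linear map with a single Jordan block of size d on V ≅ ℂ^d. Then (formulated linear-algebraically): let N be the operator on ℂ[X,Y]/(X^d,Y^d) given by multiplication by XY + X + Y, and let Ω(n) = Σ_{q=0}^{2d−2} C(n, q+1) N^q(1). Writing Ω(n) = Σ_{0 ≤ i,j ≤ d−1} P_{d−i, d−j}(n) X^i Y^j, the 'determinant' polynomial P(n) = det( (P_{a,b}(n))_{1 ≤ a,b ≤ d} ) has degree exactly d² in n. -/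
/-!
Write `T = XY + X + Y`. The `XⁱYʲ`-coefficient of `Ω(n) = Σ_q C(n, q+1) T^q` is a polynomial in `n`
(a combination of the binomial polynomials `C(n, q+1)`), and since `T^q` has no monomials of total
degree `< q` while its part of degree `q` is `(X+Y)^q`, that polynomial has degree `≤ i + j + 1`
with `n^(i+j+1)`-coefficient `C(i+j, i)/(i+j+1)!`. With these degree bounds, the
`n^(d²)`-coefficient of the determinant is the determinant of those top coefficients. That matrix
is `D H D` with `D = diag(1/i!)` and `H` the Hilbert matrix, which is positive definite as the
Gram matrix of the monomials in `L²[0, 1]`.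
-/

open Finset
open scoped Nat

theorem Polynomial.eq_of_eval_natCast_eq {R : Type*} [CommRing R] [IsDomain R] [CharZero R]
    {p q : Polynomial R} (h : ∀ n : ℕ, p.eval (n : R) = q.eval (n : R)) : p = q :=
  eq_of_infinite_eval_eq p q <| (Set.infinite_range_of_injective Nat.cast_injective).mono <| by
    rintro _ ⟨n, rfl⟩
    exact h n

section PolynomialMatrix

open Polynomial

theorem Polynomial.coeff_prod_sum_of_natDegree_le {R ι : Type*} [CommSemiring R] (s : Finset ι)
    (f : ι → R[X]) (n : ι → ℕ) (h : ∀ i ∈ s, (f i).natDegree ≤ n i) :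
    (∏ i ∈ s, f i).coeff (∑ i ∈ s, n i) = ∏ i ∈ s, (f i).coeff (n i) := by
  classical
  induction s using Finset.induction_on with
  | empty => simp
  | insert a s ha ih =>
    have hs : ∀ i ∈ s, (f i).natDegree ≤ n i := fun i hi => h i (mem_insert_of_mem hi)
    rw [prod_insert ha, sum_insert ha, prod_insert ha, coeff_mul_add_eq_of_natDegree_le
      (h a (mem_insert_self a s)) ((natDegree_prod_le ..).trans (sum_le_sum hs)), ih hs]

namespace Matrix

variable {R n : Type*} [CommRing R] [Fintype n] [DecidableEq n]

theorem natDegree_det_le_of_natDegree_le (M : Matrix n n R[X]) (a b : n → ℕ)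
    (h : ∀ i j, (M i j).natDegree ≤ a i + b j) :
    M.det.natDegree ≤ ∑ i, a i + ∑ j, b j := by
  rw [det_apply]
  refine natDegree_sum_le_of_forall_le _ _ fun σ _ => ?_
  rw [Units.smul_def]
  refine (natDegree_smul_le _ _).trans <| (natDegree_prod_le _ _).trans ?_
  rw [← Equiv.sum_comp σ a, ← sum_add_distrib]
  exact sum_le_sum fun i _ => h (σ i) i

theorem coeff_det_of_natDegree_le (M : Matrix n n R[X]) (a b : n → ℕ)
    (h : ∀ i j, (M i j).natDegree ≤ a i + b j) :
    M.det.coeff (∑ i, a i + ∑ j, b j) = (of fun i j => (M i j).coeff (a i + b j)).det := by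
  rw [det_apply, det_apply, finsetSum_coeff]
  refine sum_congr rfl fun σ _ => ?_
  rw [Units.smul_def, Units.smul_def, coeff_smul, ← Equiv.sum_comp σ a, ← sum_add_distrib,
    coeff_prod_sum_of_natDegree_le _ _ _ fun i _ => h (σ i) i]
  rfl

noncomputable def hilbertMatrix (K : Type*) [DivisionRing K] (n : ℕ) : Matrix (Fin n) (Fin n) K :=
  of fun i j => ((i + j + 1 : ℕ) : K)⁻¹

theorem dotProduct_hilbertMatrix_mulVec (n : ℕ) (x : Fin n → ℝ) :
    x ⬝ᵥ (hilbertMatrix ℝ n *ᵥ x) = ∫ t in (0 : ℝ)..1, (∑ i, x i * t ^ (i : ℕ)) ^ 2 := by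
  have hrow : ∀ i, ∫ t in (0 : ℝ)..1, ∑ j, x i * t ^ (i : ℕ) * (x j * t ^ (j : ℕ))
      = x i * ∑ j, hilbertMatrix ℝ n i j * x j := by
    intro i
    rw [intervalIntegral.integral_finsetSum fun j _ =>
      (by fun_prop : Continuous _).intervalIntegrable _ _, mul_sum]
    refine sum_congr rfl fun j _ => ?_
    have : ∀ t : ℝ, x i * t ^ (i : ℕ) * (x j * t ^ (j : ℕ)) = x i * x j * t ^ (i + j : ℕ) := by
      intro t; ring
    simp_rw [this, intervalIntegral.integral_const_mul, integral_pow, hilbertMatrix]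
    simp only [one_pow, ne_eq, Nat.add_eq_zero_iff, one_ne_zero, and_false, not_false_eq_true,
      zero_pow, sub_zero, Nat.cast_add, one_div, Nat.cast_one, of_apply]
    ring
  simp_rw [sq, sum_mul_sum]
  rw [intervalIntegral.integral_finsetSum fun i _ =>
    (by fun_prop : Continuous _).intervalIntegrable _ _]
  simp_rw [hrow]
  rfl

theorem hilbertMatrix_posDef (n : ℕ) : (hilbertMatrix ℝ n).PosDef := by
  rw [Matrix.posDef_iff_dotProduct_mulVec]
  refine ⟨?_, fun x hx => ?_⟩
  · ext i j
    simp [hilbertMatrix, add_comm]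
  · set p : ℝ[X] := ∑ i, C (x i) * X ^ (i : ℕ)
    have hp : p ≠ 0 := by
      obtain ⟨i₀, hi₀⟩ := Function.ne_iff.mp hx
      refine ne_of_apply_ne (coeff · i₀) ?_
      simpa [p, finsetSum_coeff, coeff_C_mul_X_pow, Fin.val_inj] using hi₀
    have heval : ∀ t, p.eval t = ∑ i, x i * t ^ (i : ℕ) := by simp [p, eval_finsetSum]
    obtain ⟨c, hc, hpc⟩ : ∃ c ∈ Set.Icc (0 : ℝ) 1, ¬ p.IsRoot c :=
      ((Set.Icc_infinite zero_lt_one).sdiff (finite_setOfPred_isRoot hp)).nonempty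
    simp_rw [star_trivial, dotProduct_hilbertMatrix_mulVec, ← heval]
    exact intervalIntegral.integral_pos zero_lt_one (by fun_prop) (fun t _ => sq_nonneg _)
      ⟨c, hc, sq_pos_of_ne_zero hpc⟩

theorem map_hilbertMatrix_rat {K : Type*} [DivisionRing K] [CharZero K] (n : ℕ) :
    (Rat.castHom K).mapMatrix (hilbertMatrix ℚ n) = hilbertMatrix K n := by
  ext i j
  simp [hilbertMatrix]

-- Positive definiteness is a statement over `ℝ`; the rational Hilbert matrix transports it.
theorem det_hilbertMatrix_ne_zero {K : Type*} [Field K] [CharZero K] (n : ℕ) :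
    (hilbertMatrix K n).det ≠ 0 := by
  have hℚ : (hilbertMatrix ℚ n).det ≠ 0 := by
    intro h
    have hpos := (hilbertMatrix_posDef n).det_pos
    rw [← map_hilbertMatrix_rat, ← RingHom.map_det, h, map_zero] at hpos
    exact hpos.false
  rw [← map_hilbertMatrix_rat, ← RingHom.map_det]
  exact (_root_.map_ne_zero _).mpr hℚ

theorem det_choose_div_factorial_ne_zero {K : Type*} [Field K] [CharZero K] (d : ℕ) :
    (of fun i j : Fin d => (((i : ℕ) + j).choose i : K) / ((i : ℕ) + j + 1)!).det ≠ 0 := by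
  set D : Matrix (Fin d) (Fin d) K := diagonal fun i => ((i : ℕ)! : K)⁻¹
  have hfactor : of (fun i j : Fin d => (((i : ℕ) + j).choose i : K) / ((i : ℕ) + j + 1)!)
      = D * hilbertMatrix K d * D := by
    ext i j
    have hsucc : ((i : ℕ) + (j : ℕ) + 1 : K) ≠ 0 := by exact_mod_cast ((i : ℕ) + j).succ_ne_zero
    have hfact (m : ℕ) : (m ! : K) ≠ 0 := Nat.cast_ne_zero.mpr m.factorial_ne_zero
    simp only [D, hilbertMatrix, of_apply, mul_diagonal, diagonal_mul, Nat.cast_add_choose,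
      Nat.factorial_succ, Nat.cast_mul, Nat.cast_add, Nat.cast_one]
    field_simp [hfact]
  rw [hfactor, det_mul, det_mul, det_diagonal]
  simp [det_hilbertMatrix_ne_zero, prod_ne_zero_iff, Nat.factorial_ne_zero]

end Matrix

end PolynomialMatrix

namespace TorusPlov

section Bidegree

open MvPolynomial

variable {R : Type*} [CommSemiring R]

noncomputable def bidegree (i j : ℕ) : Fin 2 →₀ ℕ := Finsupp.single 0 i + Finsupp.single 1 j

@[simp] theorem bidegree_apply_zero (i j : ℕ) : bidegree i j 0 = i := by simp [bidegree]
@[simp] theorem bidegree_apply_one (i j : ℕ) : bidegree i j 1 = j := by simp [bidegree]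

theorem bidegree_inj {i j k l : ℕ} : bidegree i j = bidegree k l ↔ i = k ∧ j = l := by
  refine ⟨fun h => ⟨by simpa using congr($h 0), by simpa using congr($h 1)⟩, ?_⟩
  rintro ⟨rfl, rfl⟩
  rfl

theorem X_pow_mul_X_pow_eq_monomial (i j : ℕ) :
    (X 0 ^ i * X 1 ^ j : MvPolynomial (Fin 2) R) = monomial (bidegree i j) 1 := by
  rw [X_pow_eq_monomial, X_pow_eq_monomial, monomial_mul, mul_one]
  rfl

theorem coeff_bidegree_mul_X_zero (p : MvPolynomial (Fin 2) R) (i j : ℕ) :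
    coeff (bidegree i j) (p * X 0) = if 0 < i then coeff (bidegree (i - 1) j) p else 0 := by
  have : bidegree i j - Finsupp.single 0 1 = bidegree (i - 1) j := by
    ext k; fin_cases k <;> simp
  simp [coeff_mul_X', this, Nat.pos_iff_ne_zero]

theorem coeff_bidegree_mul_X_one (p : MvPolynomial (Fin 2) R) (i j : ℕ) :
    coeff (bidegree i j) (p * X 1) = if 0 < j then coeff (bidegree i (j - 1)) p else 0 := by
  have : bidegree i j - Finsupp.single 1 1 = bidegree i (j - 1) := by
    ext k; fin_cases k <;> simp
  simp [coeff_mul_X', this, Nat.pos_iff_ne_zero]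

variable (R) in
noncomputable def trinomial : MvPolynomial (Fin 2) R := X 0 * X 1 + X 0 + X 1

theorem coeff_trinomial_pow {q i j : ℕ} (h : i + j ≤ q) :
    coeff (bidegree i j) (trinomial R ^ q) = if i + j = q then (q.choose i : R) else 0 := by
  induction q generalizing i j with
  | zero =>
    obtain ⟨rfl, rfl⟩ : i = 0 ∧ j = 0 := by omega
    simp [bidegree]
  | succ q ih =>
    have hstep : trinomial R ^ (q + 1) =
        trinomial R ^ q * X 0 * X 1 + trinomial R ^ q * X 0 + trinomial R ^ q * X 1 := by
      rw [pow_succ, trinomial]; ring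
    rw [hstep, coeff_add, coeff_add, coeff_bidegree_mul_X_one, coeff_bidegree_mul_X_zero,
      coeff_bidegree_mul_X_zero, coeff_bidegree_mul_X_one]
    rcases i with _ | i <;> rcases j with _ | j
    · simp
    · simp [ih (show 0 + j ≤ q by omega)]
    · simp only [lt_self_iff_false, ↓reduceIte, lt_add_iff_pos_left, Order.lt_add_one_iff,
        zero_le, add_tsub_cancel_right, ih (show i + 0 ≤ q by omega), add_zero, zero_add,
        Nat.add_right_cancel_iff]
      split_ifs <;> simp_all
    · simp only [lt_add_iff_pos_left, Order.lt_add_one_iff, zero_le, ↓reduceIte,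
        add_tsub_cancel_right, ih (show i + j ≤ q by omega), ih (show i + (j + 1) ≤ q by omega),
        ih (show i + 1 + j ≤ q by omega), Nat.choose_succ_succ', Nat.cast_add]
      split_ifs <;> first | omega | simp

theorem coeff_trinomial_pow_of_lt {q i j : ℕ} (h : i + j < q) :
    coeff (bidegree i j) (trinomial R ^ q) = 0 := by
  rw [coeff_trinomial_pow h.le, if_neg h.ne]

theorem coeff_trinomial_pow_add (i j : ℕ) :
    coeff (bidegree i j) (trinomial R ^ (i + j)) = (i + j).choose i := by
  rw [coeff_trinomial_pow le_rfl, if_pos rfl]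

theorem coeff_bidegree_sum_smul_X_pow_mul_X_pow {d : ℕ} (e : Fin d → Fin d → R) (i j : Fin d) :
    coeff (bidegree i j) (∑ a, ∑ b, e a b • (X 0 ^ (a : ℕ) * X 1 ^ (b : ℕ))) = e i j := by
  simp only [X_pow_mul_X_pow_eq_monomial, smul_monomial, coeff_sum, coeff_monomial, bidegree_inj,
    Fin.val_inj, ite_and]
  simp

end Bidegree

section QuotientCoeff

open MvPolynomial

theorem coeff_eq_zero_of_mem_span_X_pow_pair {R σ : Type*} [CommSemiring R]
    {p : MvPolynomial σ R} {a b : σ} {k l : ℕ} {m : σ →₀ ℕ}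
    (hp : p ∈ Ideal.span {X a ^ k, X b ^ l}) (ha : m a < k) (hb : m b < l) :
    coeff m p = 0 := by
  rw [X_pow_eq_monomial, X_pow_eq_monomial, ← Set.image_pair (monomial · (1 : R)),
    mem_ideal_span_monomial_image] at hp
  by_contra hm
  obtain ⟨s, hs, hle⟩ := hp m (mem_support_iff.mpr hm)
  rcases hs with rfl | rfl
  · simpa using (hle a).trans_lt ha
  · simpa using (hle b).trans_lt hb

theorem coeff_bidegree_eq_of_mk_eq {R : Type*} [CommRing R] {d i j : ℕ}
    {p q : MvPolynomial (Fin 2) R}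
    (h : Ideal.Quotient.mk (Ideal.span {X 0 ^ d, X 1 ^ d}) p = Ideal.Quotient.mk _ q)
    (hi : i < d) (hj : j < d) : coeff (bidegree i j) p = coeff (bidegree i j) q := by
  rw [← sub_eq_zero, ← coeff_sub]
  exact coeff_eq_zero_of_mem_span_X_pow_pair (Ideal.Quotient.eq.mp h) (by simpa) (by simpa)

end QuotientCoeff

section OmegaCoeff

open Polynomial

variable {K : Type*} [Field K]

variable (K) in
noncomputable def binomialPoly (k : ℕ) : K[X] := C (k ! : K)⁻¹ * descPochhammer K k

theorem coeff_binomialPoly_self (k : ℕ) : (binomialPoly K k).coeff k = (k ! : K)⁻¹ := by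
  have hlead := (monic_descPochhammer K k).coeff_natDegree
  rw [descPochhammer_natDegree] at hlead
  rw [binomialPoly, coeff_C_mul, hlead, mul_one]

variable (K) in
/-- The paper's `P_{d-i,d-j}`: its value at `n` is the `XⁱYʲ`-coefficient of `Ω(n)`. -/
noncomputable def omegaCoeff (d i j : ℕ) : K[X] :=
  ∑ q ∈ range (2 * d - 1),
    C (MvPolynomial.coeff (bidegree i j) (trinomial K ^ q)) * binomialPoly K (q + 1)

variable [CharZero K]

theorem eval_natCast_binomialPoly (k n : ℕ) : (binomialPoly K k).eval (n : K) = n.choose k := by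
  rw [binomialPoly, eval_mul, eval_C, Nat.cast_choose_eq_descPochhammer_div, inv_mul_eq_div]

theorem natDegree_binomialPoly (k : ℕ) : (binomialPoly K k).natDegree = k := by
  rw [binomialPoly, natDegree_C_mul (inv_ne_zero (Nat.cast_ne_zero.mpr k.factorial_ne_zero)),
    descPochhammer_natDegree]

theorem eval_natCast_omegaCoeff (d i j n : ℕ) :
    (omegaCoeff K d i j).eval (n : K) = MvPolynomial.coeff (bidegree i j)
      (∑ q ∈ range (2 * d - 1), (n.choose (q + 1) : K) • trinomial K ^ q) := by
  simp [omegaCoeff, eval_finsetSum, MvPolynomial.coeff_sum, eval_natCast_binomialPoly, mul_comm]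

theorem natDegree_omegaCoeff_le (d i j : ℕ) : (omegaCoeff K d i j).natDegree ≤ i + j + 1 := by
  refine natDegree_sum_le_of_forall_le _ _ fun q _ => ?_
  rcases le_or_gt q (i + j) with hq | hq
  · exact (natDegree_C_mul_le _ _).trans (by rw [natDegree_binomialPoly]; omega)
  · simp [coeff_trinomial_pow_of_lt hq]

theorem coeff_omegaCoeff {d i j : ℕ} (h : i + j < 2 * d - 1) :
    (omegaCoeff K d i j).coeff (i + j + 1) = (i + j).choose i / (i + j + 1)! := by
  rw [omegaCoeff, finsetSum_coeff, sum_eq_single_of_mem (i + j) (mem_range.mpr h),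
    coeff_C_mul, coeff_trinomial_pow_add, coeff_binomialPoly_self, div_eq_mul_inv]
  intro q _ hq
  rcases lt_or_gt_of_ne hq with hq | hq
  · rw [coeff_C_mul, coeff_eq_zero_of_natDegree_lt (p := binomialPoly K (q + 1))
      (by rw [natDegree_binomialPoly]; omega), mul_zero]
  · simp [coeff_trinomial_pow_of_lt hq]

theorem natDegree_det_omegaCoeff (d : ℕ) :
    (Matrix.of fun i j : Fin d => omegaCoeff K d i j).det.natDegree = d ^ 2 := by
  have hsum : ∑ i : Fin d, (i : ℕ) + ∑ j : Fin d, ((j : ℕ) + 1) = d ^ 2 := by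
    induction d with
    | zero => rfl
    | succ d ih => simp only [Fin.sum_univ_castSucc, Fin.val_castSucc, Fin.val_last]; nlinarith [ih]
  set M := Matrix.of fun i j : Fin d => omegaCoeff K d i j
  have hdeg (i j : Fin d) : (M i j).natDegree ≤ i + ((j : ℕ) + 1) :=
    natDegree_omegaCoeff_le d i j
  refine le_antisymm (hsum ▸ M.natDegree_det_le_of_natDegree_le _ _ hdeg)
    (le_natDegree_of_ne_zero ?_)
  rw [← hsum, M.coeff_det_of_natDegree_le _ _ hdeg]
  convert Matrix.det_choose_div_factorial_ne_zero (K := K) d using 2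
  ext i j
  rw [Matrix.of_apply, ← add_assoc]
  exact coeff_omegaCoeff (by omega)

end OmegaCoeff

end TorusPlov

open TorusPlov in
theorem stmt10_general (d : ℕ) (Q : Fin d → Fin d → Polynomial ℂ) :
    let P := MvPolynomial (Fin 2) ℂ
    let X : P := MvPolynomial.X 0
    let Y : P := MvPolynomial.X 1
    let I : Ideal P := Ideal.span {X ^ d, Y ^ d}
    let π : P →+* P ⧸ I := Ideal.Quotient.mk I
    let N : (P ⧸ I) →ₗ[ℂ] (P ⧸ I) := LinearMap.mulLeft ℂ (π (X * Y + X + Y))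
    (∀ n : ℕ, ∑ q ∈ Finset.range (2 * d - 1), ((n.choose (q + 1) : ℂ)) • (N ^ q) 1
        = π (∑ i : Fin d, ∑ j : Fin d,
            (Polynomial.eval (n : ℂ) (Q i j)) • (X ^ (i : ℕ) * Y ^ (j : ℕ)))) →
    (Matrix.of fun i j => Q i j).det.natDegree = d ^ 2 := by
  intro P X Y I π N hQ
  have hN (q : ℕ) : (N ^ q) 1 = π (trinomial ℂ ^ q) := by
    rw [LinearMap.pow_mulLeft, LinearMap.mulLeft_apply, mul_one, ← map_pow]
    rfl
  have hsmul (c : ℂ) (p : P) : c • π p = π (c • p) := (map_smul (Ideal.Quotient.mkₐ ℂ I) c p).symm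
  have heval (i j : Fin d) (n : ℕ) :
      (Q i j).eval (n : ℂ) = (omegaCoeff ℂ d i j).eval (n : ℂ) := by
    have hn := hQ n
    simp only [hN, hsmul, ← map_sum] at hn
    rw [eval_natCast_omegaCoeff, coeff_bidegree_eq_of_mk_eq hn i.isLt j.isLt]
    exact (coeff_bidegree_sum_smul_X_pow_mul_X_pow (fun a b => (Q a b).eval (n : ℂ)) i j).symm
  have hQ_eq : (Matrix.of fun i j => Q i j) = Matrix.of fun i j : Fin d => omegaCoeff ℂ d i j :=
    congrArg Matrix.of <| funext₂ fun i j => Polynomial.eq_of_eval_natCast_eq (heval i j)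
  rw [hQ_eq]
  exact natDegree_det_omegaCoeff d

/-- Core computation for tori: with `N` multiplication by `XY+X+Y` on `ℂ[X,Y]/(X^d,Y^d)`
and `Ω(n) = Σ_{q=0}^{2d−2} C(n,q+1) N^q(1) = Σ_{i,j} P_{d−i,d−j}(n) Xⁱ Yʲ`,
the determinant of the matrix of coefficient polynomials has degree exactly `d²`. -/
theorem stmt10 (d : ℕ) (hd : 1 ≤ d) (Q : Fin d → Fin d → Polynomial ℂ) :
    let P := MvPolynomial (Fin 2) ℂ
    let X : P := MvPolynomial.X 0
    let Y : P := MvPolynomial.X 1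
    let I : Ideal P := Ideal.span {X ^ d, Y ^ d}
    let π : P →+* P ⧸ I := Ideal.Quotient.mk I
    let N : (P ⧸ I) →ₗ[ℂ] (P ⧸ I) := LinearMap.mulLeft ℂ (π (X * Y + X + Y))
    (∀ n : ℕ, ∑ q ∈ Finset.range (2 * d - 1), ((n.choose (q + 1) : ℂ)) • (N ^ q) 1
        = π (∑ i : Fin d, ∑ j : Fin d,
            (Polynomial.eval (n : ℂ) (Q i j)) • (X ^ (i : ℕ) * Y ^ (j : ℕ)))) →
    (Matrix.of fun i j => Q i j).det.natDegree = d ^ 2 :=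
  stmt10_general d Q
end

section
/- Let X be a compact Kähler manifold (or smooth projective variety) of dimension d, f an automorphism with f* unipotent on H^{1,1}(X,ℝ), ω a Kähler (resp. ample) class, N = f* − Id with N^{k+1} = 0. Then the function n ↦ (Σ_{i=0}^{n} (f^i)*ω)^d (the top self-intersection number of Δ_n(f,ω)) is a polynomial in n of degree at most d + max{ Σ_{j=1}^d i_j : i_j ≥ 0 and (N^{i_1}ω)·(N^{i_2}ω)⋯(N^{i_d}ω) ≠ 0 }, and of degree at least d (since the constant-in-ω term ω^d > 0 contributes n^d · ω^d after expansion). -/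
/-!
Write `A = 1 + N` with `N ^ (k + 1) = 0`. The hockey-stick identity turns the partial sum
`Δₙ = ∑_{i ≤ n} Aⁱ ω` into `∑_{j ≤ k} C(n + 1, j + 1) • Nʲ ω`, and `n ↦ C(n + 1, j + 1)` is a
polynomial of degree `j + 1` vanishing at `n = -1`. Expanding `inter (Δₙ, …, Δₙ)` multilinearly,
the term of `(Nⁱ¹ω, …, Nⁱᵈω)` is a polynomial of degree at most `d + ∑ iₜ`, divisible by `(X + 1)ᵈ`;
the sum is nonzero because its value at `n = 0` is `inter (ω, …, ω) > 0`, so its degree is at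
least `d`.
-/

open Polynomial Finset

theorem Finset.sum_range_eq_sum_range_of_eq_zero {M : Type*} [AddCommMonoid M] {f : ℕ → M}
    {a b : ℕ} (ha : ∀ j, a ≤ j → f j = 0) (hb : ∀ j, b ≤ j → f j = 0) :
    ∑ j ∈ range a, f j = ∑ j ∈ range b, f j := by
  wlog hab : a ≤ b generalizing a b
  · exact (this hb ha (le_of_not_ge hab)).symm
  exact sum_subset (range_subset_range.2 hab) fun j _ hj => ha j (by simpa using hj)

theorem Nat.sum_range_choose_eq_choose_succ (n j : ℕ) :
    ∑ i ∈ range (n + 1), i.choose j = (n + 1).choose (j + 1) := by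
  induction n with
  | zero => cases j <;> simp [Nat.choose_eq_zero_of_lt]
  | succ n ih => rw [sum_range_succ, ih, Nat.choose_succ_succ (n + 1) j, add_comm]

theorem sum_range_add_one_pow_of_pow_eq_zero {R : Type*} [Semiring R] {x : R} {k : ℕ}
    (hx : x ^ (k + 1) = 0) (n : ℕ) :
    ∑ i ∈ range (n + 1), (x + 1) ^ i = ∑ j ∈ range (k + 1), (n + 1).choose (j + 1) • x ^ j := by
  have binomial (i : ℕ) : (x + 1) ^ i = ∑ j ∈ range (k + 1), i.choose j • x ^ j := by
    simp only [(Commute.one_right x).add_pow, one_pow, mul_one, ← nsmul_eq_mul']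
    refine sum_range_eq_sum_range_of_eq_zero (fun j hj => ?_) (fun j hj => ?_)
    · rw [Nat.choose_eq_zero_of_lt (by omega), zero_smul]
    · rw [pow_eq_zero_of_le hj hx, smul_zero]
  simp only [binomial, sum_comm (s := range (n + 1)), ← sum_smul,
    Nat.sum_range_choose_eq_choose_succ]

section ChoosePoly

variable (K : Type*) [Field K]

noncomputable def choosePoly (j : ℕ) : K[X] := C (j.factorial : K)⁻¹ * descPochhammer K j

variable {K}

theorem choosePoly_eval_natCast [CharZero K] (j a : ℕ) :
    (choosePoly K j).eval (a : K) = a.choose j := by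
  rw [choosePoly, eval_mul, eval_C, Nat.cast_choose_eq_descPochhammer_div, div_eq_inv_mul]

theorem natDegree_choosePoly_le (j : ℕ) : (choosePoly K j).natDegree ≤ j :=
  (natDegree_C_mul_le _ _).trans (descPochhammer_natDegree K j).le

theorem X_dvd_choosePoly_succ (j : ℕ) : X ∣ choosePoly K (j + 1) :=
  (descPochhammer_succ_left K j ▸ dvd_mul_right X _).mul_left _

theorem choosePoly_comp_X_add_one_eval_natCast [CharZero K] (j a : ℕ) :
    ((choosePoly K j).comp (X + 1)).eval (a : K) = (a + 1).choose j := by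
  rw [eval_comp, eval_add, eval_X, eval_one, ← Nat.cast_succ, choosePoly_eval_natCast]

theorem natDegree_choosePoly_comp_X_add_one_le (j : ℕ) :
    ((choosePoly K j).comp (X + 1)).natDegree ≤ j := by
  have hX : (X + 1 : K[X]).natDegree = 1 := by rw [← C_1, natDegree_X_add_C]
  calc ((choosePoly K j).comp (X + 1)).natDegree ≤ (choosePoly K j).natDegree * 1 :=
        hX ▸ natDegree_comp_le
    _ ≤ j := by rw [mul_one]; exact natDegree_choosePoly_le j

theorem X_add_one_dvd_choosePoly_succ_comp (j : ℕ) :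
    X + 1 ∣ (choosePoly K (j + 1)).comp (X + 1) := by
  simpa using _root_.map_dvd (compRingHom (X + 1)) (X_dvd_choosePoly_succ (K := K) j)

end ChoosePoly

namespace MultilinearMap

variable {R M ι α : Type*} [CommRing R] [AddCommGroup M] [Module R M] [Fintype ι] [DecidableEq ι]
  (f : MultilinearMap R (fun _ : ι => M) R) (s : Finset α) (q : α → R[X]) (v : α → M)

noncomputable def diagPoly : R[X] :=
  ∑ r ∈ Fintype.piFinset fun _ => s, C (f fun t => v (r t)) * ∏ t, q (r t)

theorem eval_diagPoly (x : R) :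
    (f.diagPoly s q v).eval x = f fun _ => ∑ j ∈ s, (q j).eval x • v j := by
  simp only [diagPoly, f.map_sum_finset, f.map_smul_univ, eval_finsetSum, eval_mul, eval_C,
    eval_prod, smul_eq_mul, mul_comm]

theorem natDegree_diagPoly_le {D : ℕ}
    (h : ∀ r : ι → α, f (fun t => v (r t)) ≠ 0 → ∑ t, (q (r t)).natDegree ≤ D) :
    (f.diagPoly s q v).natDegree ≤ D := by
  refine natDegree_sum_le_of_forall_le _ _ fun r _ => ?_
  by_cases hr : f (fun t => v (r t)) = 0
  · simp [hr]
  · exact (natDegree_C_mul_le _ _).trans ((natDegree_prod_le _ _).trans (h r hr))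

theorem pow_card_dvd_diagPoly {p : R[X]} (h : ∀ j ∈ s, p ∣ q j) :
    p ^ Fintype.card ι ∣ f.diagPoly s q v := by
  refine dvd_sum fun r hr => (?_ : _ ∣ _).mul_left _
  rw [← card_univ, ← prod_const]
  exact prod_dvd_prod_of_dvd _ _ fun t _ => h _ (Fintype.mem_piFinset.1 hr t)

end MultilinearMap

theorem stmt13_general {V : Type*} [AddCommGroup V] [Module ℝ V]
    {d : ℕ}
    (inter : MultilinearMap ℝ (fun _ : Fin d => V) ℝ)
    (A : V →ₗ[ℝ] V) (ω : V) (k : ℕ)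
    (hnil : (A - LinearMap.id) ^ (k + 1) = 0)
    (hω : 0 < inter (fun _ => ω))
    (m : ℕ)
    (hm : ∀ ι : Fin d → ℕ,
      inter (fun t => (((A - LinearMap.id : V →ₗ[ℝ] V)) ^ (ι t)) ω) ≠ 0 → ∑ t : Fin d, ι t ≤ m) :
    ∃ P : Polynomial ℝ,
      (∀ n : ℕ, P.eval (n : ℝ) = inter (fun _ => ∑ i ∈ Finset.range (n + 1), (A ^ i) ω)) ∧
      P.natDegree ≤ d + m ∧ d ≤ P.natDegree := by
  set N : V →ₗ[ℝ] V := A - LinearMap.id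
  set q : ℕ → ℝ[X] := fun j => (choosePoly ℝ (j + 1)).comp (X + 1)
  set P := inter.diagPoly (range (k + 1)) q fun j => (N ^ j) ω
  have hP (n : ℕ) : P.eval (n : ℝ) = inter fun _ => ∑ i ∈ range (n + 1), (A ^ i) ω := by
    have hA : N + 1 = A := sub_add_cancel A 1
    rw [MultilinearMap.eval_diagPoly, ← LinearMap.sum_apply, ← hA,
      sum_range_add_one_pow_of_pow_eq_zero hnil n]
    simp only [q, LinearMap.sum_apply, LinearMap.smul_apply,
      choosePoly_comp_X_add_one_eval_natCast, Nat.cast_smul_eq_nsmul]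
  refine ⟨P, hP, ?_, ?_⟩
  · refine inter.natDegree_diagPoly_le _ _ _ fun r hr => ?_
    calc ∑ t, (q (r t)).natDegree ≤ ∑ t, (r t + 1) :=
          sum_le_sum fun t _ => natDegree_choosePoly_comp_X_add_one_le _
      _ ≤ d + m := by simp [sum_add_distrib, hm r hr, add_comm]
  · have hP0 : P ≠ 0 := fun h => by
      have h0 := hP 0
      simp only [h, eval_zero, zero_add, sum_range_one, pow_zero, Module.End.one_apply] at h0
      exact hω.ne h0
    have hdvd : (X + C 1 : ℝ[X]) ^ d ∣ P := by
      simpa using inter.pow_card_dvd_diagPoly _ q _ fun j _ => X_add_one_dvd_choosePoly_succ_comp j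
    exact natDegree_pow_X_add_C d (1 : ℝ) ▸ natDegree_le_of_dvd hdvd hP0

/-- Abstract form of Lemma 3.5: with `A = f*` unipotent (`N = A − Id`, `N^{k+1} = 0`),
`ω` with `ω^d > 0`, `n ↦ (Σ_{i=0}^{n} Aⁱω)^d` is a polynomial in `n` of degree at most
`d + max{Σ i_j : (N^{i₁}ω)⋯(N^{i_d}ω) ≠ 0}` and at least `d`. -/
theorem stmt13 {V : Type*} [AddCommGroup V] [Module ℝ V] [FiniteDimensional ℝ V]
    {d : ℕ} (hd : 1 ≤ d)
    (inter : MultilinearMap ℝ (fun _ : Fin d => V) ℝ)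
    (A : V →ₗ[ℝ] V) (ω : V) (k : ℕ)
    (hnil : (A - LinearMap.id) ^ (k + 1) = 0)
    (hω : 0 < inter (fun _ => ω))
    (m : ℕ)
    (hm : ∀ ι : Fin d → ℕ,
      inter (fun t => (((A - LinearMap.id : V →ₗ[ℝ] V)) ^ (ι t)) ω) ≠ 0 → ∑ t : Fin d, ι t ≤ m) :
    ∃ P : Polynomial ℝ,
      (∀ n : ℕ, P.eval (n : ℝ) = inter (fun _ => ∑ i ∈ Finset.range (n + 1), (A ^ i) ω)) ∧
      P.natDegree ≤ d + m ∧ d ≤ P.natDegree :=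
  stmt13_general inter A ω k hnil hω m hm
end
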